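/- arXiv:2405.13587 — 4 statements merged into one kernel-verified Lean document; each statement's English description precedes it below -/
import Mathlib

section
/- Let e ≥ 1 and let μ : ℝ^e → ℝ^e be a continuous vector field. Let Φ : ℝ^e × ℝ → ℝ^e be continuously differentiable with ∂_t Φ(a,t) = μ(Φ(a,t)) for all (a,t). Let Ψ : ℝ^e × ℝ × ℝ → ℝ^e be continuously differentiable with Ψ(b,s,s) = b, ∂_t Ψ(b,s,t) = μ(Ψ(b,s,t)), and ∂_s Ψ(b,s,t) v = −∂_b Ψ(b,s,t)(μ(b)) v for all b,s,t (two-parameter flow of the same ODE). Let E : ℝ^e → ℝ and T : ℝ^e → ℝ^e be continuously differentiable, let a₀ ∈ ℝ^e, let U be an open neighborhood of a₀, and let τ : U → ℝ be differentiable at a₀ with E(Φ(a,τ(a))) = 0 for all a ∈ U. Fix t ∈ ℝ and set y₀ := Φ(a₀,τ(a₀)), b₀ := T(y₀), τ₀ := τ(a₀). Then the map g(a) := Ψ(T(Φ(a,τ(a))), τ(a), t) is differentiable at a₀ and Dg(a₀) = ∂_b Ψ(b₀,τ₀,t) ∘ [ ∇T(y₀) ∘ ∂_a Φ(a₀,τ₀)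 − (μ(b₀) − ∇T(y₀)μ(y₀)) · Dτ(a₀) ], i.e. for every h ∈ ℝ^e, Dg(a₀)h = ∂_b Ψ(b₀,τ₀,t)[ ∇T(y₀)(∂_a Φ(a₀,τ₀)h) − (μ(b₀) − ∇T(y₀)μ(y₀)) (Dτ(a₀)h) ]. (This is the post-event Jacobian recursion ∂y^n_t = (∂_{y^n_{τ_n}} y^n_t)[∇T ∂y^{n−1}_{τ_n} − (μ(y^n_{τ_n}) − ∇T μ(y^{n−1}_{τ_n}))∂τ_n] of Theorem 3.6 in the drift-only (ODE) case.) -/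
/-!
By the chain rule, the derivative of `a ↦ f (u a, σ a)` is `∂₁f ∘ Du + Dσ ⊗ ∂₂f`. Applied to
`a ↦ Φ (a, τ a)` the time partial is `μ(y₀)` by the flow equation; applied to
`(b, s) ↦ Ψ (b, s, t)` at the reset state it is `-∂_bΨ μ(b₀)` by the hypothesis on `∂_sΨ`.
Inserting `∇T` between the two and collecting the `Dτ(a₀) h` terms under `∂_bΨ` gives the formula.
-/

open ContinuousLinearMap in
theorem DifferentiableAt.hasFDerivAt_comp_prodMk_real
    {G E F : Type*} [NormedAddCommGroup G] [NormedSpace ℝ G] [NormedAddCommGroup E]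
    [NormedSpace ℝ E] [NormedAddCommGroup F] [NormedSpace ℝ F]
    {f : E × ℝ → F} {u : G → E} {σ : G → ℝ} {u' : G →L[ℝ] E} {σ' : G →L[ℝ] ℝ} {a : G}
    (hf : DifferentiableAt ℝ f (u a, σ a)) (hu : HasFDerivAt u u' a)
    (hσ : HasFDerivAt σ σ' a) :
    HasFDerivAt (fun x => f (u x, σ x))
      (fderiv ℝ (fun y => f (y, σ a)) (u a) ∘L u'
        + σ'.smulRight (deriv (fun r => f (u a, r)) (σ a))) a := by
  have hL := hf.hasFDerivAt
  have hpartial_fst : fderiv ℝ (fun y => f (y, σ a)) (u a) = fderiv ℝ f (u a, σ a) ∘L inl ℝ E ℝ :=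
    (hL.comp (u a) (hasFDerivAt_prodMk_left (u a) (σ a))).fderiv
  have hpartial_snd : deriv (fun r => f (u a, r)) (σ a) = fderiv ℝ f (u a, σ a) (0, 1) :=
    (hL.comp (σ a) (hasFDerivAt_prodMk_right (u a) (σ a))).hasDerivAt.deriv.trans (by simp)
  refine (hL.comp a (hu.prodMk hσ)).congr_fderiv ?_
  ext h
  rw [hpartial_fst, hpartial_snd]
  simp only [add_apply, coe_comp, Function.comp_apply, inl_apply, smulRight_apply, prod_apply]
  rw [← map_smul, ← map_add]
  simp

theorem post_event_jacobian_general
    (e : ℕ)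
    (μ : (Fin e → ℝ) → (Fin e → ℝ))
    (Φ : (Fin e → ℝ) × ℝ → (Fin e → ℝ)) (hΦ : ContDiff ℝ 1 Φ)
    (hflowΦ : ∀ (a : Fin e → ℝ) (t : ℝ),
      HasDerivAt (fun s : ℝ => Φ (a, s)) (μ (Φ (a, t))) t)
    (Ψ : (Fin e → ℝ) × ℝ × ℝ → (Fin e → ℝ)) (hΨ : ContDiff ℝ 1 Ψ)
    (hΨ_s : ∀ (b : Fin e → ℝ) (s t : ℝ),
      deriv (fun r : ℝ => Ψ (b, r, t)) s =
        -(fderiv ℝ (fun b' => Ψ (b', s, t)) b (μ b)))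
    (T : (Fin e → ℝ) → (Fin e → ℝ)) (hT : ContDiff ℝ 1 T)
    (a₀ : Fin e → ℝ)
    (τ : (Fin e → ℝ) → ℝ) (hτ : DifferentiableAt ℝ τ a₀)
    (t : ℝ) :
    DifferentiableAt ℝ (fun a => Ψ (T (Φ (a, τ a)), τ a, t)) a₀ ∧
    (∀ h : Fin e → ℝ,
      fderiv ℝ (fun a => Ψ (T (Φ (a, τ a)), τ a, t)) a₀ h =
        fderiv ℝ (fun b => Ψ (b, τ a₀, t)) (T (Φ (a₀, τ a₀)))
          (fderiv ℝ T (Φ (a₀, τ a₀)) (fderiv ℝ (fun a => Φ (a, τ a₀)) a₀ h)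
            - (fderiv ℝ τ a₀ h) •
              (μ (T (Φ (a₀, τ a₀)))
                - fderiv ℝ T (Φ (a₀, τ a₀)) (μ (Φ (a₀, τ a₀))))) ) := by
  have hΦd := hΦ.differentiable one_ne_zero
  have hΨd := hΨ.differentiable one_ne_zero
  have hTd := hT.differentiable one_ne_zero
  have hstate : HasFDerivAt (fun a => Φ (a, τ a))
      (fderiv ℝ (fun a => Φ (a, τ a₀)) a₀ + (fderiv ℝ τ a₀).smulRight (μ (Φ (a₀, τ a₀)))) a₀ := by
    simpa [(hflowΦ a₀ (τ a₀)).deriv] using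
      (hΦd (a₀, τ a₀)).hasFDerivAt_comp_prodMk_real (hasFDerivAt_id a₀) hτ.hasFDerivAt
  have hreset : HasFDerivAt (fun a => T (Φ (a, τ a))) _ a₀ :=
    (hTd _).hasFDerivAt.comp a₀ hstate
  have hΨ_bs : DifferentiableAt ℝ (fun p : (Fin e → ℝ) × ℝ => Ψ (p.1, p.2, t))
      (T (Φ (a₀, τ a₀)), τ a₀) := by fun_prop
  have hpost := hΨ_bs.hasFDerivAt_comp_prodMk_real hreset hτ.hasFDerivAt
  simp only [hΨ_s] at hpost
  refine ⟨hpost.differentiableAt, fun h => ?_⟩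
  rw [hpost.fderiv]
  simp only [ContinuousLinearMap.comp_add, add_apply,
    ContinuousLinearMap.comp_apply, ContinuousLinearMap.smulRight_apply, map_smul, smul_neg,
    map_sub]
  module

/-- Post-event Jacobian recursion for an Event ODE (drift-only case of Theorem 3.6):
with `Φ` the one-parameter flow of `dy = μ(y)dt`, `Ψ` the two-parameter flow of the same ODE,
`τ` a differentiable event-time function with `E(Φ(a,τ(a))) = 0`, and `T` the transition map,
the post-event state `g(a) = Ψ(T(Φ(a,τ(a))), τ(a), t)` is differentiable at `a₀` with
`Dg(a₀)h = ∂_bΨ(b₀,τ₀,t)[∇T(y₀)(∂_aΦ(a₀,τ₀)h) − (μ(b₀) − ∇T(y₀)μ(y₀))(Dτ(a₀)h)]`. -/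
theorem post_event_jacobian
    (e : ℕ) (he : 1 ≤ e)
    (μ : (Fin e → ℝ) → (Fin e → ℝ)) (hμ : Continuous μ)
    (Φ : (Fin e → ℝ) × ℝ → (Fin e → ℝ)) (hΦ : ContDiff ℝ 1 Φ)
    (hflowΦ : ∀ (a : Fin e → ℝ) (t : ℝ),
      HasDerivAt (fun s : ℝ => Φ (a, s)) (μ (Φ (a, t))) t)
    (Ψ : (Fin e → ℝ) × ℝ × ℝ → (Fin e → ℝ)) (hΨ : ContDiff ℝ 1 Ψ)
    (hΨ_init : ∀ (b : Fin e → ℝ) (s : ℝ), Ψ (b, s, s) = b)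
    (hΨ_t : ∀ (b : Fin e → ℝ) (s t : ℝ),
      HasDerivAt (fun r : ℝ => Ψ (b, s, r)) (μ (Ψ (b, s, t))) t)
    (hΨ_s : ∀ (b : Fin e → ℝ) (s t : ℝ),
      deriv (fun r : ℝ => Ψ (b, r, t)) s =
        -(fderiv ℝ (fun b' => Ψ (b', s, t)) b (μ b)))
    (E : (Fin e → ℝ) → ℝ) (hE : ContDiff ℝ 1 E)
    (T : (Fin e → ℝ) → (Fin e → ℝ)) (hT : ContDiff ℝ 1 T)
    (a₀ : Fin e → ℝ) (U : Set (Fin e → ℝ)) (hU : IsOpen U) (ha₀ : a₀ ∈ U)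
    (τ : (Fin e → ℝ) → ℝ) (hτ : DifferentiableAt ℝ τ a₀)
    (hevent : ∀ a ∈ U, E (Φ (a, τ a)) = 0)
    (t : ℝ) :
    DifferentiableAt ℝ (fun a => Ψ (T (Φ (a, τ a)), τ a, t)) a₀ ∧
    (∀ h : Fin e → ℝ,
      fderiv ℝ (fun a => Ψ (T (Φ (a, τ a)), τ a, t)) a₀ h =
        fderiv ℝ (fun b => Ψ (b, τ a₀, t)) (T (Φ (a₀, τ a₀)))
          (fderiv ℝ T (Φ (a₀, τ a₀)) (fderiv ℝ (fun a => Φ (a, τ a₀)) a₀ h)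
            - (fderiv ℝ τ a₀ h) •
              (μ (T (Φ (a₀, τ a₀)))
                - fderiv ℝ T (Φ (a₀, τ a₀)) (μ (Φ (a₀, τ a₀))))) ) :=
  post_event_jacobian_general e μ Φ hΦ hflowΦ Ψ hΨ hΨ_s T hT a₀ τ hτ t
end

section
/- Let e ≥ 1 and T_h > 0. Let Φ : ℝ^e × ℝ × ℝ → ℝ^e be continuous with Φ(a,s,s) = a and Φ(Φ(a,s,r), r, t) = Φ(a,s,t) for all a and s ≤ r ≤ t (a two-parameter flow). Let E : ℝ^e → ℝ be continuous and T : ℝ^e → ℝ^e. Assume: (i) there exists c > 0 such that for every s ∈ [0,T_h] and every a in the image of T, E(Φ(a,s,t)) ≠ 0 for all t ∈ (s, min(s+c, T_h)]; (ii) E(T(y)) ≠ 0 for every y with E(y) = 0; (iii) E(y₀) ≠ 0. Define recursively τ₀ := 0, y⁰_t := Φ(y₀,0,t), and, as long as the set {t ∈ (τ_{n−1}, T_h] : E(y^{n−1}_t) = 0} is nonempty, τ_n := inf{t ∈ (τ_{n−1}, T_h] : E(y^{n−1}_t) = 0} and y^n_t := Φ(T(y^{n−1}_{τ_n}), τ_n,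 t). Then: (a) each such infimum is attained, i.e. E(y^{n−1}_{τ_n}) = 0, and τ_n > τ_{n−1}; (b) τ_{n+1} − τ_n ≥ c for every n ≥ 1, so the total number N of event times in [0,T_h] is finite with N ≤ T_h/c + 1; (c) if (ỹ, (τ̃_n)_{n=1}^N) is any pair consisting of event times 0 < τ̃_1 < … < τ̃_N ≤ T_h and a trajectory ỹ with ỹ_t = Φ(y₀,0,t) on [0,τ̃_1), ỹ_t = Φ(T(ỹ_{τ̃_n−}), τ̃_n, t) on [τ̃_n, τ̃_{n+1}) with τ̃_n the first zero of E along the preceding branch, then τ̃_n = τ_n for all n and ỹ agrees with the trajectory built from the y^n. -/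
/-- Existence and uniqueness for deterministic Event ODEs (drift-only specialization of
Theorem 3.3): under the refractory-time assumption (i), the no-event-after-transition
assumption (ii) and `E(y₀) ≠ 0`, the recursively defined event times are attained zeros of
`E`, are strictly increasing, successive events are separated by at least `c` (so there are
at most `T_h/c + 1` events), and any other solution with the same data coincides with the
constructed one. -/
theorem event_ode_existence_uniqueness
    (e : ℕ) (he : 1 ≤ e) (Th : ℝ) (hTh : 0 < Th)
    (Φ : (Fin e → ℝ) → ℝ → ℝ → (Fin e → ℝ))
    (hΦcont : Continuous (fun p : (Fin e → ℝ) × ℝ × ℝ => Φ p.1 p.2.1 p.2.2))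
    (hΦinit : ∀ (a : Fin e → ℝ) (s : ℝ), Φ a s s = a)
    (hΦflow : ∀ (a : Fin e → ℝ) (s r t : ℝ), s ≤ r → r ≤ t →
      Φ (Φ a s r) r t = Φ a s t)
    (E : (Fin e → ℝ) → ℝ) (hE : Continuous E)
    (T : (Fin e → ℝ) → (Fin e → ℝ))
    (c : ℝ) (hc : 0 < c)
    -- (i) refractory-time assumption
    (hrefr : ∀ s ∈ Set.Icc (0 : ℝ) Th, ∀ a ∈ Set.range T,
      ∀ t ∈ Set.Ioc s (min (s + c) Th), E (Φ a s t) ≠ 0)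
    -- (ii) a transition never lands on the event set
    (htrans : ∀ y : Fin e → ℝ, E y = 0 → E (T y) ≠ 0)
    -- (iii) no event at the initial condition
    (y₀ : Fin e → ℝ) (hy₀ : E y₀ ≠ 0)
    -- the recursively constructed solution, with `N` events in `[0, Th]`
    (N : ℕ) (τ : ℕ → ℝ) (y : ℕ → ℝ → (Fin e → ℝ))
    (hτ0 : τ 0 = 0)
    (hy0 : ∀ t, y 0 t = Φ y₀ 0 t)
    (hrec : ∀ n, 1 ≤ n → n ≤ N →
      ({t : ℝ | t ∈ Set.Ioc (τ (n - 1)) Th ∧ E (y (n - 1) t) = 0}).Nonempty ∧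
      τ n = sInf {t : ℝ | t ∈ Set.Ioc (τ (n - 1)) Th ∧ E (y (n - 1) t) = 0} ∧
      (∀ t, y n t = Φ (T (y (n - 1) (τ n))) (τ n) t))
    (hstop : {t : ℝ | t ∈ Set.Ioc (τ N) Th ∧ E (y N t) = 0} = ∅) :
    -- (a) each infimum is attained and the event times strictly increase
    (∀ n, 1 ≤ n → n ≤ N → E (y (n - 1) (τ n)) = 0 ∧ τ (n - 1) < τ n) ∧
    -- (b) refractory gap and finiteness bound on the number of events
    (∀ n, 1 ≤ n → n + 1 ≤ N → c ≤ τ (n + 1) - τ n) ∧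
    ((N : ℝ) ≤ Th / c + 1) ∧
    -- (c) uniqueness: any other event-time/trajectory pair with the same data coincides
    (∀ (τ' : ℕ → ℝ) (y' : ℕ → ℝ → (Fin e → ℝ)),
      τ' 0 = 0 →
      (∀ n, n < N → τ' n < τ' (n + 1)) →
      (∀ n, n ≤ N → τ' n ≤ Th) →
      (∀ t, y' 0 t = Φ y₀ 0 t) →
      (∀ n, 1 ≤ n → n ≤ N →
        E (y' (n - 1) (τ' n)) = 0 ∧
        (∀ t ∈ Set.Ioo (τ' (n - 1)) (τ' n), E (y' (n - 1) t) ≠ 0) ∧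
        (∀ t, y' n t = Φ (T (y' (n - 1) (τ' n))) (τ' n) t)) →
      ∀ n, n ≤ N → τ' n = τ n ∧ ∀ t, y' n t = y n t) := by

  -- continuity of the flow in time
  have hΦt : ∀ (a : Fin e → ℝ) (s : ℝ), Continuous (fun t => Φ a s t) := by
    intro a s
    exact hΦcont.comp (continuous_const.prodMk (continuous_const.prodMk continuous_id))
  -- continuity of each branch
  have hycont : ∀ m, m ≤ N → Continuous (fun t => y m t) := by
    intro m hm
    match m with
    | 0 =>
      have : (fun t => y 0 t) = fun t => Φ y₀ 0 t := funext hy0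
      rw [this]; exact hΦt y₀ 0
    | Nat.succ k =>
      obtain ⟨-, -, h3⟩ := hrec (k + 1) (Nat.succ_le_succ (Nat.zero_le k)) hm
      simp only [Nat.add_sub_cancel] at h3
      have : (fun t => y (k + 1) t) = fun t => Φ (T (y k (τ (k + 1)))) (τ (k + 1)) t :=
        funext h3
      rw [this]; exact hΦt _ _
  -- key induction : attainment, strict increase, and the invariant E (y n (τ n)) ≠ 0
  have key : ∀ n, n ≤ N →
      (E (y n (τ n)) ≠ 0 ∧ (1 ≤ n → E (y (n - 1) (τ n)) = 0 ∧ τ (n - 1) < τ n)) := by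
    intro n
    induction n with
    | zero =>
      intro _
      refine ⟨?_, by omega⟩
      rw [hτ0, hy0, hΦinit]; exact hy₀
    | succ k ih =>
      intro hk
      have hkN : k ≤ N := le_trans (Nat.le_succ k) hk
      obtain ⟨hinv, -⟩ := ih hkN
      obtain ⟨hSne, hτdef, hyform⟩ := hrec (k + 1) (Nat.succ_le_succ (Nat.zero_le k)) hk
      simp only [Nat.add_sub_cancel] at hSne hτdef hyform
      set S := {t : ℝ | t ∈ Set.Ioc (τ k) Th ∧ E (y k t) = 0} with hSdef
      have hbdd : BddBelow S := ⟨τ k, fun t ht => ht.1.1.le⟩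
      have hclosed : IsClosed {t : ℝ | E (y k t) = 0} :=
        isClosed_eq (hE.comp (hycont k hkN)) continuous_const
      have hzero : E (y k (τ (k + 1))) = 0 := by
        have h1 : sInf S ∈ closure S := csInf_mem_closure hSne hbdd
        have h2 : closure S ⊆ {t : ℝ | E (y k t) = 0} :=
          closure_minimal (fun t ht => ht.2) hclosed
        rw [hτdef]; exact h2 h1
      have hle : τ k ≤ τ (k + 1) := by
        rw [hτdef]; exact le_csInf hSne (fun t ht => ht.1.1.le)
      have hlt : τ k < τ (k + 1) := by
        rcases lt_or_eq_of_le hle with h | h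
        · exact h
        · exact absurd (h ▸ hzero) hinv
      refine ⟨?_, fun _ => by simpa using ⟨hzero, hlt⟩⟩
      rw [hyform, hΦinit]
      exact htrans _ hzero
  -- τ is bounded by Th and nonnegative up to N
  have hτle : ∀ n, n ≤ N → τ n ≤ Th := by
    intro n hn
    match n with
    | 0 => rw [hτ0]; exact hTh.le
    | Nat.succ k =>
      obtain ⟨hSne, hτdef, -⟩ := hrec (k + 1) (Nat.succ_le_succ (Nat.zero_le k)) hn
      obtain ⟨t0, ht0⟩ := hSne
      have hbdd : BddBelow {t : ℝ | t ∈ Set.Ioc (τ (k + 1 - 1)) Th ∧ E (y (k + 1 - 1) t) = 0} :=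
        ⟨τ (k + 1 - 1), fun t ht => ht.1.1.le⟩
      exact le_trans (hτdef ▸ csInf_le hbdd ht0) ht0.1.2
  have hτnonneg : ∀ n, n ≤ N → 0 ≤ τ n := by
    intro n
    induction n with
    | zero => intro _; rw [hτ0]
    | succ k ih =>
      intro hk
      have hkN : k ≤ N := le_trans (Nat.le_succ k) hk
      have := (key (k + 1) hk).2 (Nat.succ_le_succ (Nat.zero_le k))
      simp only [Nat.add_sub_cancel] at this
      exact le_trans (ih hkN) this.2.le
  -- the refractory gap
  have hgap : ∀ n, 1 ≤ n → n + 1 ≤ N → τ n + c ≤ τ (n + 1) := by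
    intro n hn1 hn
    have hnN : n ≤ N := le_trans (Nat.le_succ n) hn
    obtain ⟨-, -, hyform⟩ := hrec n hn1 hnN
    obtain ⟨hSne, hτdef, -⟩ := hrec (n + 1) (Nat.succ_le_succ (Nat.zero_le n)) hn
    simp only [Nat.add_sub_cancel] at hSne hτdef
    have hsIcc : τ n ∈ Set.Icc (0 : ℝ) Th := ⟨hτnonneg n hnN, hτle n hnN⟩
    have ha : T (y (n - 1) (τ n)) ∈ Set.range T := ⟨_, rfl⟩
    have hallS : ∀ t ∈ {t : ℝ | t ∈ Set.Ioc (τ n) Th ∧ E (y n t) = 0}, τ n + c ≤ t := by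
      rintro t ⟨⟨htl, htr⟩, htz⟩
      by_contra hcon
      push_neg at hcon
      have hmin : t ∈ Set.Ioc (τ n) (min (τ n + c) Th) := by
        constructor
        · exact htl
        · exact le_min hcon.le htr
      have := hrefr (τ n) hsIcc _ ha t hmin
      rw [hyform t] at htz
      exact this htz
    rw [hτdef]
    exact le_csInf hSne hallS
  -- chain bound : τ n ≥ τ 1 + (n - 1) * c for 1 ≤ n ≤ N
  have hchain : ∀ n, 1 ≤ n → n ≤ N → τ 1 + ((n : ℝ) - 1) * c ≤ τ n := by
    intro n
    induction n with
    | zero => omega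
    | succ k ih =>
      intro _ hk
      rcases Nat.eq_zero_or_pos k with hk0 | hk1
      · subst hk0; simp
      · have hkN : k ≤ N := le_trans (Nat.le_succ k) hk
        have h1 := ih hk1 hkN
        have h2 := hgap k hk1 hk
        push_cast
        nlinarith
  -- pack up the three quantitative conclusions
  have haConc : ∀ n, 1 ≤ n → n ≤ N → E (y (n - 1) (τ n)) = 0 ∧ τ (n - 1) < τ n :=
    fun n hn1 hn => (key n hn).2 hn1
  refine ⟨haConc, ?_, ?_, ?_⟩
  · intro n hn1 hn
    have := hgap n hn1 hn
    linarith
  · -- bound on N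
    rcases Nat.eq_zero_or_pos N with hN0 | hN1
    · subst hN0
      simp only [Nat.cast_zero]
      positivity
    · have h1 := hchain N hN1 le_rfl
      have h2 := hτle N le_rfl
      have h3 : 0 < τ 1 := by
        have := (haConc 1 le_rfl hN1).2
        simpa [hτ0] using this
      have h4 : ((N : ℝ) - 1) * c ≤ Th := by linarith
      rw [div_add' _ _ _ (ne_of_gt hc), le_div_iff₀ hc]
      nlinarith
  · -- uniqueness
    intro τ' y' hτ'0 hmono' hle' hy'0 hstep' n
    induction n with
    | zero =>
      intro _
      exact ⟨by rw [hτ'0, hτ0], fun t => by rw [hy'0 t, hy0 t]⟩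
    | succ k ih =>
      intro hk
      have hkN : k ≤ N := le_trans (Nat.le_succ k) hk
      obtain ⟨hτeq, hyeq⟩ := ih hkN
      obtain ⟨hz', hno', hyform'⟩ := hstep' (k + 1) (Nat.succ_le_succ (Nat.zero_le k)) hk
      simp only [Nat.add_sub_cancel] at hz' hno' hyform'
      obtain ⟨hSne, hτdef, hyform⟩ := hrec (k + 1) (Nat.succ_le_succ (Nat.zero_le k)) hk
      simp only [Nat.add_sub_cancel] at hSne hτdef hyform
      have hbdd : BddBelow {t : ℝ | t ∈ Set.Ioc (τ k) Th ∧ E (y k t) = 0} :=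
        ⟨τ k, fun t ht => ht.1.1.le⟩
      have hzS : τ' (k + 1) ∈ {t : ℝ | t ∈ Set.Ioc (τ k) Th ∧ E (y k t) = 0} := by
        refine ⟨⟨?_, hle' (k + 1) hk⟩, ?_⟩
        · rw [← hτeq]; exact hmono' k (Nat.lt_of_succ_le hk)
        · rw [← hyeq]; exact hz'
      have hle1 : τ (k + 1) ≤ τ' (k + 1) := hτdef ▸ csInf_le hbdd hzS
      have hkey := (key (k + 1) hk).2 (Nat.succ_le_succ (Nat.zero_le k))
      simp only [Nat.add_sub_cancel] at hkey
      have hτeq1 : τ' (k + 1) = τ (k + 1) := by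
        rcases lt_or_eq_of_le hle1 with h | h
        · exfalso
          have hIoo : τ (k + 1) ∈ Set.Ioo (τ' k) (τ' (k + 1)) := ⟨hτeq ▸ hkey.2, h⟩
          have := hno' (τ (k + 1)) hIoo
          rw [hyeq] at this
          exact this hkey.1
        · exact h.symm
      refine ⟨hτeq1, fun t => ?_⟩
      rw [hyform' t, hyform t, hτeq1, hyeq]
end

section
/- Let e ≥ 1, T > 0, let E : ℝ^e → ℝ be continuous, and let y : [0,T] → ℝ^e be continuous. Suppose τ ∈ (0,T) satisfies: E(y_t) < 0 for all t ∈ [0,τ), E(y_τ) = 0, and for every η > 0 there exists t ∈ (τ, min(τ+η, T)) with E(y_t) > 0. Let y^m : [0,T] → ℝ^e be a sequence of continuous functions converging to y uniformly on [0,T]. Define τ^m := inf{t ∈ [0,T] : E(y^m_t) ≥ 0} (with inf ∅ := T). Then τ^m → τ and y^m_{τ^m} → y_τ as m → ∞. -/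
open Filter

lemma comp_unif_first_event {e : ℕ} {T : ℝ} {E : (Fin e → ℝ) → ℝ} (hE : Continuous E)
    {y : ℝ → Fin e → ℝ} (hy : ContinuousOn y (Set.Icc 0 T))
    {ym : ℕ → ℝ → Fin e → ℝ}
    (hconv : TendstoUniformlyOn ym y atTop (Set.Icc 0 T)) :
    TendstoUniformlyOn (fun m t => E (ym m t)) (fun t => E (y t)) atTop (Set.Icc 0 T) := by
  rw [Metric.tendstoUniformlyOn_iff] at hconv ⊢
  intro ε hε
  have hK₀ : IsCompact (y '' Set.Icc 0 T) := (isCompact_Icc).image_of_continuousOn hy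
  have hK : IsCompact (Metric.cthickening 1 (y '' Set.Icc 0 T)) := hK₀.cthickening
  have hUC : UniformContinuousOn E (Metric.cthickening 1 (y '' Set.Icc 0 T)) :=
    hK.uniformContinuousOn_of_continuous hE.continuousOn
  rw [Metric.uniformContinuousOn_iff] at hUC
  obtain ⟨δ, hδ, hδUC⟩ := hUC ε hε
  filter_upwards [hconv (min δ 1) (lt_min hδ one_pos)] with m hm t ht
  have h1 := hm t ht
  have hyK : y t ∈ Metric.cthickening 1 (y '' Set.Icc 0 T) :=
    Metric.self_subset_cthickening _ (Set.mem_image_of_mem y ht)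
  have hymK : ym m t ∈ Metric.cthickening 1 (y '' Set.Icc 0 T) := by
    apply Metric.mem_cthickening_of_dist_le (ym m t) (y t) 1 _ (Set.mem_image_of_mem y ht)
    rw [dist_comm]
    exact (h1.le.trans (min_le_right _ _))
  exact hδUC _ hyK _ hymK (lt_of_lt_of_le h1 (min_le_left _ _))

open Filter Classical in

/-- Stability of first event times under uniform convergence (deterministic core of
Lemma B.1, parts (2)–(3)): if `E∘y` is negative before `τ`, vanishes at `τ`, and takes
positive values immediately after `τ`, and `yᵐ → y` uniformly on `[0,T]`, then the first
hitting times `τᵐ = inf{t ∈ [0,T] : E(yᵐ_t) ≥ 0}` (with `inf ∅ = T`) converge to `τ` and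
the states `yᵐ_{τᵐ}` converge to `y_τ`. -/
theorem first_event_time_stability
    (e : ℕ) (he : 1 ≤ e) (T : ℝ) (hT : 0 < T)
    (E : (Fin e → ℝ) → ℝ) (hE : Continuous E)
    (y : ℝ → (Fin e → ℝ)) (hy : ContinuousOn y (Set.Icc 0 T))
    (τ : ℝ) (hτ : τ ∈ Set.Ioo 0 T)
    (hneg : ∀ t ∈ Set.Ico (0 : ℝ) τ, E (y t) < 0)
    (hzero : E (y τ) = 0)
    (hcross : ∀ η > (0 : ℝ), ∃ t ∈ Set.Ioo τ (min (τ + η) T), 0 < E (y t))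
    (ym : ℕ → ℝ → (Fin e → ℝ)) (hym : ∀ m, ContinuousOn (ym m) (Set.Icc 0 T))
    (hconv : TendstoUniformlyOn ym y atTop (Set.Icc 0 T))
    (τm : ℕ → ℝ)
    (hτm : ∀ m, τm m =
      if ({t : ℝ | t ∈ Set.Icc 0 T ∧ 0 ≤ E (ym m t)}).Nonempty
      then sInf {t : ℝ | t ∈ Set.Icc 0 T ∧ 0 ≤ E (ym m t)}
      else T) :
    Tendsto τm atTop (nhds τ) ∧
    Tendsto (fun m => ym m (τm m)) atTop (nhds (y τ)) := by
  obtain ⟨hτ0, hτT⟩ := hτ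
  have hg : TendstoUniformlyOn (fun m t => E (ym m t)) (fun t => E (y t)) atTop
      (Set.Icc 0 T) := comp_unif_first_event hE hy hconv
  rw [Metric.tendstoUniformlyOn_iff] at hg
  -- membership of τm in [0,T]
  have hτm_mem : ∀ m, τm m ∈ Set.Icc (0:ℝ) T := by
    intro m
    rw [hτm m]
    split_ifs with h
    · obtain ⟨t, ht⟩ := h
      have hbdd : BddBelow {t : ℝ | t ∈ Set.Icc 0 T ∧ 0 ≤ E (ym m t)} :=
        ⟨0, fun s hs => hs.1.1⟩
      exact ⟨le_csInf ⟨t, ht⟩ (fun s hs => hs.1.1), (csInf_le hbdd ht).trans ht.1.2⟩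
    · exact ⟨hT.le, le_refl T⟩
  -- τm → τ
  have htt : Tendsto τm atTop (nhds τ) := by
    rw [Metric.tendsto_nhds]
    intro ε hε
    set ε₁ : ℝ := min (ε/2) (min (τ/2) ((T-τ)/2)) with hε₁def
    have hε₁ : 0 < ε₁ := by
      refine lt_min (by linarith) (lt_min (by linarith) (by linarith))
    have hε₁ε : ε₁ < ε := (min_le_left _ _).trans_lt (by linarith)
    have hε₁τ : ε₁ < τ := ((min_le_right _ _).trans (min_le_left _ _)).trans_lt (by linarith)
    -- the crossing point just after τ
    obtain ⟨tp, htp, hctp⟩ := hcross ε₁ hε₁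
    have htpT : tp ≤ T := le_of_lt (htp.2.trans_le (min_le_right _ _))
    have htp0 : (0:ℝ) ≤ tp := (hτ0.trans htp.1).le
    have htpτ : tp ≤ τ + ε₁ := le_of_lt (htp.2.trans_le (min_le_left _ _))
    -- the negative bound on [0, τ - ε₁]
    have haub : τ - ε₁ ≤ T := by linarith
    have ha0 : (0:ℝ) ≤ τ - ε₁ := by linarith
    have hsub : Set.Icc (0:ℝ) (τ - ε₁) ⊆ Set.Icc 0 T :=
      Set.Icc_subset_Icc le_rfl haub
    have hfc : ContinuousOn (fun t => E (y t)) (Set.Icc (0:ℝ) (τ - ε₁)) :=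
      hE.comp_continuousOn (hy.mono hsub)
    obtain ⟨t₀, ht₀, hmax⟩ := isCompact_Icc.exists_isMaxOn
      (Set.nonempty_Icc.2 ha0) hfc
    have hδ : 0 < -(E (y t₀)) := by
      have : E (y t₀) < 0 := hneg t₀ ⟨ht₀.1, ht₀.2.trans_lt (by linarith)⟩
      linarith
    filter_upwards [hg (E (y tp)) hctp, hg (-(E (y t₀))) hδ] with m h1 h2
    have hbdd : BddBelow {t : ℝ | t ∈ Set.Icc 0 T ∧ 0 ≤ E (ym m t)} :=
      ⟨0, fun s hs => hs.1.1⟩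
    -- set is nonempty: tp belongs
    have hpos : 0 < E (ym m tp) := by
      have := h1 tp ⟨htp0, htpT⟩
      rw [Real.dist_eq, abs_lt] at this
      linarith [this.2]
    have hne : ({t : ℝ | t ∈ Set.Icc 0 T ∧ 0 ≤ E (ym m t)}).Nonempty :=
      ⟨tp, ⟨⟨htp0, htpT⟩, hpos.le⟩⟩
    rw [hτm m, if_pos hne]
    -- upper bound
    have hub : sInf {t : ℝ | t ∈ Set.Icc 0 T ∧ 0 ≤ E (ym m t)} ≤ τ + ε₁ :=
      (csInf_le hbdd ⟨⟨htp0, htpT⟩, hpos.le⟩).trans htpτ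
    -- lower bound
    have hlb : τ - ε₁ ≤ sInf {t : ℝ | t ∈ Set.Icc 0 T ∧ 0 ≤ E (ym m t)} := by
      refine le_csInf hne (fun s hs => ?_)
      by_contra hcon
      push_neg at hcon
      have hsI : s ∈ Set.Icc (0:ℝ) (τ - ε₁) := ⟨hs.1.1, hcon.le⟩
      have hmaxs : E (y s) ≤ E (y t₀) := hmax hsI
      have := h2 s hs.1
      rw [Real.dist_eq, abs_lt] at this
      have : E (ym m s) < 0 := by linarith [this.1]
      linarith [hs.2]
    rw [Real.dist_eq]
    have : |sInf {t : ℝ | t ∈ Set.Icc 0 T ∧ 0 ≤ E (ym m t)} - τ| ≤ ε₁ :=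
      abs_le.2 ⟨by linarith, by linarith⟩
    linarith
  refine ⟨htt, ?_⟩
  -- y (τm m) → y τ
  have h2 : Tendsto (fun m => y (τm m)) atTop (nhds (y τ)) := by
    have hcw : ContinuousWithinAt y (Set.Icc 0 T) τ :=
      hy.continuousWithinAt ⟨hτ0.le, hτT.le⟩
    exact hcw.tendsto.comp
      (tendsto_nhdsWithin_iff.2 ⟨htt, Eventually.of_forall hτm_mem⟩)
  rw [Metric.tendsto_nhds] at h2 ⊢
  intro ε hε
  have hconvε := (Metric.tendstoUniformlyOn_iff.1 hconv) (ε/2) (by linarith)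
  have h2ε := h2 (ε/2) (by linarith)
  filter_upwards [hconvε, h2ε] with m hm hym2
  calc dist (ym m (τm m)) (y τ)
      ≤ dist (ym m (τm m)) (y (τm m)) + dist (y (τm m)) (y τ) := dist_triangle _ _ _
    _ < ε/2 + ε/2 := by
        refine add_lt_add ?_ hym2
        rw [dist_comm]
        exact hm (τm m) (hτm_mem m)
    _ = ε := by ring
end

section
/- Let (X, Σ) be a measurable space, H a real Hilbert space, F : X → H strongly measurable, and μ, ν probability measures on X with ∫ ‖F(x)‖ dμ(x) < ∞ and ∫ ‖F(x)‖ dν(x) < ∞; set k(x,y) := ⟨F(x), F(y)⟩_H. Let m, n ≥ 2, and let X₁,…,X_m, Y₁,…,Y_n be independent random elements of X, with each X_i distributed according to μ and each Y_j distributed according to ν. Then the estimator L := (1/(m(m−1))) Σ_{i≠j} k(X_i, X_j) − (2/(mn)) Σ_{i=1}^m Σ_{j=1}^n k(X_i, Y_j) + (1/(n(n−1))) Σ_{i≠j} k(Y_i, Y_j) is integrable and satisfies E[L] = ‖∫ F dμ − ∫ F dν‖_H². -/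
/-!
Expanding the estimator, every summand is `⟪F U, F V⟫` for two independent samples `U, V`, so by
independence (Fubini against the continuous bilinear map `⟪·, ·⟫`) its mean is the inner product of
the two kernel mean embeddings. The normalising constants are exactly the numbers of summands, so
`E[L] = ⟪a, a⟫ - 2 ⟪a, b⟫ + ⟪b, b⟫ = ‖a - b‖²` with `a = ∫ F dμ`, `b = ∫ F dν`. This is why the
diagonal terms `⟪F Xᵢ, F Xᵢ⟫`, whose mean is `∫ ‖F‖² dμ`, are left out.
-/

open MeasureTheory ProbabilityTheory Finset
open scoped RealInnerProductSpace

namespace ProbabilityTheory.IndepFun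

variable {Ω X Y H : Type*} [MeasurableSpace Ω] [MeasurableSpace X] [MeasurableSpace Y]
  [NormedAddCommGroup H] [InnerProductSpace ℝ H]
  {P : Measure Ω} {U : Ω → X} {V : Ω → Y} {F : X → H} {G : Y → H}

theorem integrable_inner_comp_comp (hUV : U ⟂ᵢ[P] V) (hU : AEMeasurable U P)
    (hV : AEMeasurable V P) (hF : Integrable F (P.map U)) (hG : Integrable G (P.map V)) :
    Integrable (fun ω => ⟪F (U ω), G (V ω)⟫) P := by
  borelize H
  exact (hUV.comp₀ hU hV hF.1.aemeasurable hG.1.aemeasurable).integrable_bilin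
    (hF.comp_aemeasurable hU) (hG.comp_aemeasurable hV) (innerSL ℝ)

theorem integral_inner_comp_comp [CompleteSpace H] (hUV : U ⟂ᵢ[P] V) (hU : AEMeasurable U P)
    (hV : AEMeasurable V P) (hF : Integrable F (P.map U)) (hG : Integrable G (P.map V)) :
    ∫ ω, ⟪F (U ω), G (V ω)⟫ ∂P = ⟪∫ x, F x ∂P.map U, ∫ y, G y ∂P.map V⟫ := by
  rw [integral_map hU hF.1, integral_map hV hG.1]
  exact hUV.integral_bilin_comp_comp hU hV hF hG (innerSL ℝ)

end ProbabilityTheory.IndepFun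

theorem Finset.sum_univ_offDiag {ι M : Type*} [Fintype ι] [DecidableEq ι] [AddCommMonoid M]
    (g : ι → ι → M) :
    ∑ p ∈ (univ : Finset ι).offDiag, g p.1 p.2 = ∑ i, ∑ j, if i ≠ j then g i j else 0 := by
  rw [← sum_product' (f := fun i j => if i ≠ j then g i j else 0), ← sum_filter]
  congr 1
  ext p
  simp

theorem Finset.natCast_card_offDiag {α R : Type*} [DecidableEq α] [Ring R] (s : Finset α) :
    (#s.offDiag : R) = #s * (#s - 1) := by
  rw [offDiag_card, Nat.cast_sub (Nat.le_mul_self _), Nat.cast_mul, mul_sub_one]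

theorem MeasureTheory.integral_finsetSum_eq_card_smul {Ω ι E : Type*} [MeasurableSpace Ω]
    [NormedAddCommGroup E] [NormedSpace ℝ E] {P : Measure Ω} {s : Finset ι} {f : ι → Ω → E}
    {c : E} (hf : ∀ i ∈ s, Integrable (f i) P) (hc : ∀ i ∈ s, ∫ ω, f i ω ∂P = c) :
    ∫ ω, ∑ i ∈ s, f i ω ∂P = #s • c := by
  rw [integral_finsetSum s hf, sum_congr rfl hc, sum_const]

theorem ProbabilityTheory.integrable_and_integral_sum_inner_of_indepFun
    {Ω X Y κ H : Type*} [MeasurableSpace Ω] [MeasurableSpace X] [MeasurableSpace Y]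
    [NormedAddCommGroup H] [InnerProductSpace ℝ H] [CompleteSpace H] {P : Measure Ω}
    {F : X → H} {G : Y → H} {ρ : Measure X} {σ : Measure Y} (s : Finset κ)
    {U : κ → Ω → X} {V : κ → Ω → Y} (hU : ∀ k, Measurable (U k)) (hV : ∀ k, Measurable (V k))
    (hUV : ∀ k ∈ s, U k ⟂ᵢ[P] V k) (hUρ : ∀ k, P.map (U k) = ρ) (hVσ : ∀ k, P.map (V k) = σ)
    (hF : Integrable F ρ) (hG : Integrable G σ) :
    Integrable (fun ω => ∑ k ∈ s, ⟪F (U k ω), G (V k ω)⟫) P ∧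
      ∫ ω, ∑ k ∈ s, ⟪F (U k ω), G (V k ω)⟫ ∂P = #s * ⟪∫ x, F x ∂ρ, ∫ y, G y ∂σ⟫ := by
  have hFU (k : κ) : Integrable F (P.map (U k)) := hUρ k ▸ hF
  have hGV (k : κ) : Integrable G (P.map (V k)) := hVσ k ▸ hG
  have hint (k : κ) (hk : k ∈ s) : Integrable (fun ω => ⟪F (U k ω), G (V k ω)⟫) P :=
    (hUV k hk).integrable_inner_comp_comp (hU k).aemeasurable (hV k).aemeasurable (hFU k) (hGV k)
  refine ⟨integrable_finsetSum s hint, ?_⟩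
  rw [integral_finsetSum_eq_card_smul hint fun k hk => ?_, nsmul_eq_mul]
  rw [(hUV k hk).integral_inner_comp_comp (hU k).aemeasurable (hV k).aemeasurable (hFU k) (hGV k),
    hUρ, hVσ]

theorem mmd_estimator_unbiased_general
    {X : Type*} [MeasurableSpace X]
    {H : Type*} [NormedAddCommGroup H] [InnerProductSpace ℝ H] [CompleteSpace H]
    (F : X → H) (hF : StronglyMeasurable F)
    (μ ν : Measure X)
    (hμ : Integrable (fun x => ‖F x‖) μ) (hν : Integrable (fun x => ‖F x‖) ν)
    (m n : ℕ) (hm : 2 ≤ m) (hn : 2 ≤ n)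
    {Ω : Type*} [MeasurableSpace Ω] (P : Measure Ω)
    (Xs : Fin m → Ω → X) (Ys : Fin n → Ω → X)
    (hXmeas : ∀ i, Measurable (Xs i)) (hYmeas : ∀ j, Measurable (Ys j))
    (hindep : iIndepFun (m := fun _ : Fin m ⊕ Fin n => (inferInstance : MeasurableSpace X))
      (Sum.elim Xs Ys) P)
    (hXlaw : ∀ i, P.map (Xs i) = μ) (hYlaw : ∀ j, P.map (Ys j) = ν)
    (L : Ω → ℝ)
    (hL : ∀ ω, L ω =
      (1 / ((m : ℝ) * ((m : ℝ) - 1))) *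
        (∑ i : Fin m, ∑ j : Fin m,
          if i ≠ j then (inner ℝ (F (Xs i ω)) (F (Xs j ω)) : ℝ) else 0)
      - (2 / ((m : ℝ) * (n : ℝ))) *
        (∑ i : Fin m, ∑ j : Fin n, (inner ℝ (F (Xs i ω)) (F (Ys j ω)) : ℝ))
      + (1 / ((n : ℝ) * ((n : ℝ) - 1))) *
        (∑ i : Fin n, ∑ j : Fin n,
          if i ≠ j then (inner ℝ (F (Ys i ω)) (F (Ys j ω)) : ℝ) else 0)) :
    Integrable L P ∧
    ∫ ω, L ω ∂P = ‖(∫ x, F x ∂μ) - ∫ x, F x ∂ν‖ ^ 2 := by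
  have hFμ : Integrable F μ := (integrable_norm_iff hF.aestronglyMeasurable).1 hμ
  have hFν : Integrable F ν := (integrable_norm_iff hF.aestronglyMeasurable).1 hν
  obtain ⟨hIXX, hEXX⟩ := integrable_and_integral_sum_inner_of_indepFun
    (univ : Finset (Fin m)).offDiag (fun p => hXmeas p.1) (fun p => hXmeas p.2)
    (fun p hp => hindep.indepFun (i := .inl p.1) (j := .inl p.2) (by simpa using hp))
    (fun p => hXlaw p.1) (fun p => hXlaw p.2) hFμ hFμ
  obtain ⟨hIXY, hEXY⟩ := integrable_and_integral_sum_inner_of_indepFun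
    (univ : Finset (Fin m × Fin n)) (fun p => hXmeas p.1) (fun p => hYmeas p.2)
    (fun p _ => hindep.indepFun (i := .inl p.1) (j := .inr p.2) Sum.inl_ne_inr)
    (fun p => hXlaw p.1) (fun p => hYlaw p.2) hFμ hFν
  obtain ⟨hIYY, hEYY⟩ := integrable_and_integral_sum_inner_of_indepFun
    (univ : Finset (Fin n)).offDiag (fun p => hYmeas p.1) (fun p => hYmeas p.2)
    (fun p hp => hindep.indepFun (i := .inr p.1) (j := .inr p.2) (by simpa using hp))
    (fun p => hYlaw p.1) (fun p => hYlaw p.2) hFν hFν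
  have hL_eq : L = fun ω =>
      1 / ((m : ℝ) * ((m : ℝ) - 1)) *
        ∑ p ∈ (univ : Finset (Fin m)).offDiag, ⟪F (Xs p.1 ω), F (Xs p.2 ω)⟫
      - 2 / ((m : ℝ) * (n : ℝ)) * ∑ p : Fin m × Fin n, ⟪F (Xs p.1 ω), F (Ys p.2 ω)⟫
      + 1 / ((n : ℝ) * ((n : ℝ) - 1)) *
        ∑ p ∈ (univ : Finset (Fin n)).offDiag, ⟪F (Ys p.1 ω), F (Ys p.2 ω)⟫ := by
    ext ω
    rw [hL, ← sum_univ_offDiag, ← sum_univ_offDiag, Fintype.sum_prod_type]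
  subst hL_eq
  refine ⟨by fun_prop, ?_⟩
  rw [integral_add (by fun_prop) (by fun_prop), integral_sub (by fun_prop) (by fun_prop),
    integral_const_mul, integral_const_mul, integral_const_mul, hEXX, hEXY, hEYY,
    norm_sub_sq_real, ← real_inner_self_eq_norm_sq, ← real_inner_self_eq_norm_sq]
  simp only [natCast_card_offDiag, card_univ, Fintype.card_prod, Fintype.card_fin, Nat.cast_mul]
  have hm₀ : (m : ℝ) ≠ 0 := mod_cast (by omega : m ≠ 0)
  have hm₁ : (m : ℝ) - 1 ≠ 0 := sub_ne_zero.2 (mod_cast (by omega : m ≠ 1))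
  have hn₀ : (n : ℝ) ≠ 0 := mod_cast (by omega : n ≠ 0)
  have hn₁ : (n : ℝ) - 1 ≠ 0 := sub_ne_zero.2 (mod_cast (by omega : n ≠ 1))
  field_simp

/-- Unbiasedness of the empirical MMD estimator (Section 4.1): for i.i.d.-type samples
`X₁,…,X_m ∼ μ` and `Y₁,…,Y_n ∼ ν`, jointly independent, the U-statistic
`L = (1/(m(m−1)))Σ_{i≠j}k(X_i,X_j) − (2/(mn))Σ_{i,j}k(X_i,Y_j) + (1/(n(n−1)))Σ_{i≠j}k(Y_i,Y_j)`
with `k(x,y) = ⟨F(x),F(y)⟩` is integrable and has expectation `‖∫F dμ − ∫F dν‖²`. -/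
theorem mmd_estimator_unbiased
    {X : Type*} [MeasurableSpace X]
    {H : Type*} [NormedAddCommGroup H] [InnerProductSpace ℝ H] [CompleteSpace H]
    (F : X → H) (hF : StronglyMeasurable F)
    (μ ν : Measure X) [IsProbabilityMeasure μ] [IsProbabilityMeasure ν]
    (hμ : Integrable (fun x => ‖F x‖) μ) (hν : Integrable (fun x => ‖F x‖) ν)
    (m n : ℕ) (hm : 2 ≤ m) (hn : 2 ≤ n)
    {Ω : Type*} [MeasurableSpace Ω] (P : Measure Ω) [IsProbabilityMeasure P]
    (Xs : Fin m → Ω → X) (Ys : Fin n → Ω → X)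
    (hXmeas : ∀ i, Measurable (Xs i)) (hYmeas : ∀ j, Measurable (Ys j))
    (hindep : iIndepFun (m := fun _ : Fin m ⊕ Fin n => (inferInstance : MeasurableSpace X))
      (Sum.elim Xs Ys) P)
    (hXlaw : ∀ i, P.map (Xs i) = μ) (hYlaw : ∀ j, P.map (Ys j) = ν)
    (L : Ω → ℝ)
    (hL : ∀ ω, L ω =
      (1 / ((m : ℝ) * ((m : ℝ) - 1))) *
        (∑ i : Fin m, ∑ j : Fin m,
          if i ≠ j then (inner ℝ (F (Xs i ω)) (F (Xs j ω)) : ℝ) else 0)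
      - (2 / ((m : ℝ) * (n : ℝ))) *
        (∑ i : Fin m, ∑ j : Fin n, (inner ℝ (F (Xs i ω)) (F (Ys j ω)) : ℝ))
      + (1 / ((n : ℝ) * ((n : ℝ) - 1))) *
        (∑ i : Fin n, ∑ j : Fin n,
          if i ≠ j then (inner ℝ (F (Ys i ω)) (F (Ys j ω)) : ℝ) else 0)) :
    Integrable L P ∧
    ∫ ω, L ω ∂P = ‖(∫ x, F x ∂μ) - ∫ x, F x ∂ν‖ ^ 2 :=
  mmd_estimator_unbiased_general F hF μ ν hμ hν m n hm hn P Xs Ys hXmeas hYmeas hindep hXlaw hYlaw L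
    hL
end
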